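/- Let G be a finite non-cyclic 2-group such that G has at most one maximal cyclic subgroup of order greater than 4, and such that every pair of distinct maximal cyclic subgroups of G of order greater than 2 has nontrivial intersection. Then the power graph P(G) has no cyclic vertex cutset, i.e., P(G) is not cyclically separable. -/

import Mathlib

/-!
Let `S` be a cyclic vertex cutset. The identity is adjacent to every vertex, so it lies in `S`;
hence every edge of `P(G) - S` has an endpoint of order greater than 2. By the intersection
hypothesis, all elements of order greater than 2 contain one and the same involution `t`.
If `t ∉ S`, it is adjacent to a vertex of each of the two cycles and joins them. If `t ∈ S`,
no involution outside `S` has a neighbour, so cycles consist of elements of order at least 4;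
as a cyclic group of order 4 has only two generators, three consecutive vertices of a cycle
cannot all have order 4, so each cycle reaches an element of order greater than 4. Two such
elements lie in the unique maximal cyclic subgroup of order greater than 4, so one is a power
of the other, and the two cycles are joined again.
-/

/-- The power graph of a group `G`: distinct `x, y` are adjacent iff one is a power
of the other. -/
def powerGraph (G : Type*) [Group G] : SimpleGraph G where
  Adj x y := x ≠ y ∧ (x ∈ Subgroup.zpowers y ∨ y ∈ Subgroup.zpowers x)
  symm := ⟨fun _ _ h => ⟨h.1.symm, h.2.symm⟩⟩
  loopless := ⟨fun _ h => h.1 rfl⟩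

/-- The enhanced power graph of a group `G`: distinct `x, y` are adjacent iff they
lie in a common cyclic subgroup. -/
def enhancedPowerGraph (G : Type*) [Group G] : SimpleGraph G where
  Adj x y := x ≠ y ∧ ∃ z : G, x ∈ Subgroup.zpowers z ∧ y ∈ Subgroup.zpowers z
  symm := ⟨fun _ _ h => ⟨h.1.symm, h.2.choose, h.2.choose_spec.2, h.2.choose_spec.1⟩⟩
  loopless := ⟨fun _ h => h.1 rfl⟩

/-- A subgroup is a maximal cyclic subgroup if it is cyclic and not properly contained
in any other cyclic subgroup. -/
def IsMaximalCyclic {G : Type*} [Group G] (M : Subgroup G) : Prop :=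
  (∃ x : G, M = Subgroup.zpowers x) ∧
    ∀ N : Subgroup G, (∃ y : G, N = Subgroup.zpowers y) → M ≤ N → M = N

/-- The difference number `∂(G)`: the maximum of
`min (|M \ N|, |N \ M|)` over pairs of maximal cyclic subgroups `M, N`. -/
noncomputable def diffNumber (G : Type*) [Group G] : ℕ :=
  sSup { n : ℕ | ∃ M N : Subgroup G, IsMaximalCyclic M ∧ IsMaximalCyclic N ∧
    n = min (((M : Set G) \ (N : Set G)).ncard) (((N : Set G) \ (M : Set G)).ncard) }

/-- A graph has a cycle. -/
def HasCycle {V : Type*} (Γ : SimpleGraph V) : Prop :=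
  ∃ (v : V) (w : Γ.Walk v v), w.IsCycle

/-- `S` is a cyclic vertex cutset of `Γ` if `Γ - S` is disconnected and at least two
of its connected components contain a cycle. -/
def IsCyclicVertexCutset {V : Type*} (Γ : SimpleGraph V) (S : Set V) : Prop :=
  ¬ (Γ.induce Sᶜ).Connected ∧
    ∃ u v : ↥Sᶜ, ¬ (Γ.induce Sᶜ).Reachable u v ∧
      (∃ w : (Γ.induce Sᶜ).Walk u u, w.IsCycle) ∧
      (∃ w : (Γ.induce Sᶜ).Walk v v, w.IsCycle)

/-- A graph is cyclically separable if it has a cyclic vertex cutset. -/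
def CyclicallySeparable {V : Type*} (Γ : SimpleGraph V) : Prop :=
  ∃ S : Set V, IsCyclicVertexCutset Γ S

/-- The cyclic vertex connectivity: the minimum cardinality of a cyclic vertex cutset,
`⊤ = ∞` if there is none. -/
noncomputable def cyclicVertexConnectivity {V : Type*} (Γ : SimpleGraph V) : ℕ∞ :=
  ⨅ S ∈ {S : Set V | IsCyclicVertexCutset Γ S}, (S.ncard : ℕ∞)

/-- The vertex connectivity: the minimum number of vertices whose deletion results in a
disconnected or trivial graph. -/
noncomputable def vertexConnectivity {V : Type*} (Γ : SimpleGraph V) : ℕ :=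
  sInf { n : ℕ | ∃ S : Set V, S.ncard = n ∧
    ((Sᶜ : Set V).Subsingleton ∨ ¬ (Γ.induce Sᶜ).Connected) }

open Subgroup SimpleGraph

section CyclicSubgroups

variable {G : Type*} [Group G]

theorem eq_of_mem_zpowers_of_orderOf_eq_two {x y : G} (hx : x ∈ zpowers y)
    (hx2 : orderOf x = 2) (hy2 : orderOf y = 2) : x = y := by
  classical
  have hy : IsOfFinOrder y := orderOf_pos_iff.mp (by omega)
  obtain ⟨k, hk, rfl⟩ := Finset.mem_image.mp (hy.mem_zpowers_iff_mem_range_orderOf.mp hx)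
  rw [hy2, Finset.mem_range] at hk
  interval_cases k
  · simp at hx2
  · simp

theorem eq_or_eq_inv_of_mem_zpowers_of_orderOf_eq_four {x y : G} (hx : x ∈ zpowers y)
    (hx4 : orderOf x = 4) (hy4 : orderOf y = 4) : x = y ∨ x = y⁻¹ := by
  classical
  have hy : IsOfFinOrder y := orderOf_pos_iff.mp (by omega)
  obtain ⟨k, hk, rfl⟩ := Finset.mem_image.mp (hy.mem_zpowers_iff_mem_range_orderOf.mp hx)
  rw [hy4, Finset.mem_range] at hk
  interval_cases k
  · simp at hx4
  · simp
  · rw [orderOf_pow_of_dvd two_ne_zero (by omega), hy4] at hx4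
    omega
  · refine Or.inr (eq_inv_of_mul_eq_one_left ?_)
    rw [← pow_succ, show 3 + 1 = orderOf y by omega, pow_orderOf_eq_one]

variable [Finite G]

theorem mem_zpowers_of_orderOf_dvd {g x y : G} (hx : x ∈ zpowers g) (hy : y ∈ zpowers g)
    (h : orderOf x ∣ orderOf y) : x ∈ zpowers y := by
  classical
  have : Fintype (zpowers g) := Fintype.ofFinite _
  let a : zpowers g := ⟨x, hx⟩
  let b : zpowers g := ⟨y, hy⟩
  -- In the cyclic group `⟨g⟩` the equation `z ^ |b| = 1` has at most `|b|` solutions, so its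
  -- solutions are exactly the elements of `⟨b⟩`.
  let sols : Finset (zpowers g) := Finset.univ.filter (fun z => z ^ orderOf b = 1)
  have hsub : (zpowers b : Set (zpowers g)).toFinset ⊆ sols := fun z hz => by
    rw [Set.mem_toFinset, SetLike.mem_coe] at hz
    simpa [sols] using orderOf_dvd_iff_pow_eq_one.mp (orderOf_dvd_of_mem_zpowers hz)
  have hcard : sols.card ≤ (zpowers b : Set (zpowers g)).toFinset.card := by
    rw [Set.toFinset_card, Fintype.card_eq_nat_card]
    change _ ≤ Nat.card (zpowers b)
    rw [Nat.card_zpowers]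
    exact IsCyclic.card_pow_eq_one_le (orderOf_pos b)
  have ha : a ∈ sols := by
    simpa [sols] using orderOf_dvd_iff_pow_eq_one.mp (by simpa [a, b, orderOf_mk] using h)
  rw [← Finset.eq_of_subset_of_card_le hsub hcard, Set.mem_toFinset, SetLike.mem_coe] at ha
  simpa [MonoidHom.map_zpowers] using mem_map_of_mem (zpowers g).subtype ha

theorem subsingleton_orderOf_eq_two_mem_zpowers (g : G) :
    {a | a ∈ zpowers g ∧ orderOf a = 2}.Subsingleton := fun a ⟨ha, ha2⟩ b ⟨hb, hb2⟩ =>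
  eq_of_mem_zpowers_of_orderOf_eq_two (mem_zpowers_of_orderOf_dvd ha hb (by rw [ha2, hb2]))
    ha2 hb2

theorem two_le_orderOf {x : G} (hx : x ≠ 1) : 2 ≤ orderOf x := by
  have := orderOf_pos x
  have : orderOf x ≠ 1 := fun h => hx (orderOf_eq_one_iff.mp h)
  omega

theorem exists_mem_zpowers_orderOf_eq_of_dvd {g : G} {n : ℕ} (hn : n ∣ orderOf g) :
    ∃ t ∈ zpowers g, orderOf t = n :=
  ⟨g ^ (orderOf g / n), npow_mem_zpowers g _, orderOf_pow_orderOf_div (orderOf_pos g).ne' hn⟩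

theorem two_lt_orderOf_of_mem_zpowers {a b : G} (hb : b ∈ zpowers a) (hba : b ≠ a)
    (hb1 : b ≠ 1) : 2 < orderOf a := by
  by_contra! ha
  have := two_le_orderOf hb1
  have := Nat.le_of_dvd (orderOf_pos a) (orderOf_dvd_of_mem_zpowers hb)
  exact hba (eq_of_mem_zpowers_of_orderOf_eq_two hb (by omega) (by omega))

theorem exists_isMaximalCyclic_mem (x : G) : ∃ M, IsMaximalCyclic M ∧ x ∈ M := by
  let cyclic : Set (Subgroup G) := {H | ∃ y, H = zpowers y}
  have hfin : cyclic.Finite :=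
    (Set.finite_range zpowers).subset (by rintro _ ⟨y, rfl⟩; exact ⟨y, rfl⟩)
  obtain ⟨M, hxM, hM, hmax⟩ := hfin.exists_le_maximal (a := zpowers x) ⟨x, rfl⟩
  exact ⟨M, ⟨hM, fun N hN hMN => le_antisymm hMN (hmax hN hMN)⟩, zpowers_le.mp hxM⟩

end CyclicSubgroups

namespace IsPGroup

variable {G : Type*} [Group G]

theorem orderOf_eq_four (hG : IsPGroup 2 G) {x : G} (h2 : 2 < orderOf x) (h4 : orderOf x ≤ 4) :
    orderOf x = 4 := by
  obtain ⟨k, hk⟩ := hG.exists_orderOf_eq_pow x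
  rw [hk] at h2 h4 ⊢
  have hk1 : 1 < k := (Nat.pow_lt_pow_iff_right one_lt_two).mp (by simpa using h2)
  have hk2 : k ≤ 2 := (Nat.pow_le_pow_iff_right one_lt_two).mp (by simpa using h4)
  rw [show k = 2 by omega]
  rfl

variable [Finite G]

theorem mem_zpowers_or_mem_zpowers {p : ℕ} [Fact p.Prime] (hG : IsPGroup p G) {g x y : G}
    (hx : x ∈ zpowers g) (hy : y ∈ zpowers g) : x ∈ zpowers y ∨ y ∈ zpowers x := by
  obtain ⟨a, ha⟩ := hG.exists_orderOf_eq_pow x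
  obtain ⟨b, hb⟩ := hG.exists_orderOf_eq_pow y
  rcases le_total a b with hab | hab
  · exact Or.inl (mem_zpowers_of_orderOf_dvd hx hy (ha ▸ hb ▸ pow_dvd_pow p hab))
  · exact Or.inr (mem_zpowers_of_orderOf_dvd hy hx (ha ▸ hb ▸ pow_dvd_pow p hab))

theorem mem_zpowers_of_orderOf_eq_two (hG : IsPGroup 2 G)
    (h2 : ∀ M N : Subgroup G, IsMaximalCyclic M → IsMaximalCyclic N → M ≠ N →
      2 < Nat.card M → 2 < Nat.card N → M ⊓ N ≠ ⊥)
    {t x y : G} (ht : orderOf t = 2) (htx : t ∈ zpowers x) (hx : 2 < orderOf x)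
    (hy : 2 < orderOf y) : t ∈ zpowers y := by
  have ne_one {z : G} (hz : 2 < orderOf z) : z ≠ 1 := by rintro rfl; simp at hz
  obtain ⟨M, hM, hxM⟩ := exists_isMaximalCyclic_mem x
  obtain ⟨N, hN, hyN⟩ := exists_isMaximalCyclic_mem y
  obtain ⟨s, hsy, hs⟩ := exists_mem_zpowers_orderOf_eq_of_dvd (hG.dvd_orderOf (ne_one hy))
  -- `M` and `N` share an involution `r`, which is then the only involution of each.
  obtain ⟨r, ⟨hrM, hrN⟩, hr⟩ : ∃ r ∈ M ⊓ N, orderOf r = 2 := by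
    by_cases hMN : M = N
    · exact ⟨s, ⟨hMN ▸ zpowers_le.mpr hyN hsy, zpowers_le.mpr hyN hsy⟩, hs⟩
    · have hcard {z : G} {K : Subgroup G} (hz : z ∈ K) (hz2 : 2 < orderOf z) : 2 < Nat.card K :=
        hz2.trans_le (K.orderOf_le_card (Set.toFinite _) hz)
      obtain ⟨z, hz, hz1⟩ :=
        (M ⊓ N).bot_or_exists_ne_one.resolve_left
          (h2 M N hM hN hMN (hcard hxM hx) (hcard hyN hy))
      obtain ⟨r, hrz, hr⟩ := exists_mem_zpowers_orderOf_eq_of_dvd (hG.dvd_orderOf hz1)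
      exact ⟨r, zpowers_le.mpr hz hrz, hr⟩
  obtain ⟨m, rfl⟩ := hM.1
  obtain ⟨n, rfl⟩ := hN.1
  rwa [subsingleton_orderOf_eq_two_mem_zpowers m ⟨zpowers_le.mpr hxM htx, ht⟩ ⟨hrM, hr⟩,
    ← subsingleton_orderOf_eq_two_mem_zpowers n ⟨zpowers_le.mpr hyN hsy, hs⟩ ⟨hrN, hr⟩]

theorem mem_zpowers_or_mem_zpowers_of_four_lt (hG : IsPGroup 2 G)
    (h4 : ∀ M N : Subgroup G, IsMaximalCyclic M → IsMaximalCyclic N →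
      4 < Nat.card M → 4 < Nat.card N → M = N)
    {x y : G} (hx : 4 < orderOf x) (hy : 4 < orderOf y) : x ∈ zpowers y ∨ y ∈ zpowers x := by
  obtain ⟨M, hM, hxM⟩ := exists_isMaximalCyclic_mem x
  obtain ⟨N, hN, hyN⟩ := exists_isMaximalCyclic_mem y
  have hMN := h4 M N hM hN (hx.trans_le (M.orderOf_le_card (Set.toFinite _) hxM))
    (hy.trans_le (N.orderOf_le_card (Set.toFinite _) hyN))
  obtain ⟨m, rfl⟩ := hM.1
  exact hG.mem_zpowers_or_mem_zpowers hxM (hMN ▸ hyN)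

end IsPGroup

section PowerGraph

variable {G : Type*} [Group G]

theorem powerGraph_induce_reachable_of_mem_zpowers {T : Set G} {x y : T}
    (h : (x : G) ∈ zpowers (y : G) ∨ (y : G) ∈ zpowers (x : G)) :
    ((powerGraph G).induce T).Reachable x y := by
  by_cases hxy : x = y
  · exact hxy ▸ Reachable.refl x
  · exact Adj.reachable ⟨fun h => hxy (Subtype.ext h), h⟩

theorem powerGraph_induce_connected_of_one_mem {T : Set G} (h1 : (1 : G) ∈ T) :
    ((powerGraph G).induce T).Connected := by
  have : Nonempty T := ⟨⟨1, h1⟩⟩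
  have hreach (x : T) : ((powerGraph G).induce T).Reachable x ⟨1, h1⟩ :=
    powerGraph_induce_reachable_of_mem_zpowers (Or.inr (one_mem _))
  exact ⟨fun x y => (hreach x).trans (hreach y).symm⟩

variable [Finite G]

theorem mem_zpowers_of_powerGraph_adj_of_orderOf_eq_two {a b : G} (hab : (powerGraph G).Adj a b)
    (hb : b ≠ 1) (ha : orderOf a = 2) : a ∈ zpowers b :=
  hab.2.resolve_right fun hba => (two_lt_orderOf_of_mem_zpowers hba hab.1.symm hb).ne' ha

theorem eq_inv_of_powerGraph_adj_of_orderOf_eq_four {a b : G} (hab : (powerGraph G).Adj a b)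
    (ha : orderOf a = 4) (hb : orderOf b = 4) : a = b⁻¹ := by
  have hmem : a ∈ zpowers b := hab.2.elim id fun hba =>
    mem_zpowers_of_orderOf_dvd (mem_zpowers a) hba (by rw [ha, hb])
  exact (eq_or_eq_inv_of_mem_zpowers_of_orderOf_eq_four hmem ha hb).resolve_left hab.1

theorem IsPGroup.four_lt_orderOf_of_powerGraph_adj (hG : IsPGroup 2 G) {a b c : G}
    (hab : (powerGraph G).Adj a b) (hbc : (powerGraph G).Adj b c) (hac : a ≠ c)
    (ha : 2 < orderOf a) (hb : 2 < orderOf b) (hc : 2 < orderOf c) :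
    4 < orderOf a ∨ 4 < orderOf b ∨ 4 < orderOf c := by
  by_contra! h
  have hb4 := hG.orderOf_eq_four hb h.2.1
  exact hac ((eq_inv_of_powerGraph_adj_of_orderOf_eq_four hab (hG.orderOf_eq_four ha h.1) hb4).trans
    (eq_inv_of_powerGraph_adj_of_orderOf_eq_four hbc.symm (hG.orderOf_eq_four hc h.2.2) hb4).symm)

variable {T : Set G}

theorem exists_reachable_two_lt_orderOf_of_isCycle (h1 : (1 : G) ∉ T) {u : T}
    {w : ((powerGraph G).induce T).Walk u u} (hw : w.IsCycle) :
    ∃ x : T, ((powerGraph G).induce T).Reachable u x ∧ 2 < orderOf (x : G) := by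
  have hadj := w.adj_snd hw.not_nil
  have ne_one (x : T) : (x : G) ≠ 1 := fun hx => h1 (hx ▸ x.2)
  rcases hadj.2 with hu | hb
  · exact ⟨w.snd, hadj.reachable, two_lt_orderOf_of_mem_zpowers hu hadj.1 (ne_one u)⟩
  · exact ⟨u, .refl u, two_lt_orderOf_of_mem_zpowers hb hadj.1.symm (ne_one _)⟩

variable {t : G} (h1 : (1 : G) ∉ T) (ht : ∀ y : G, 2 < orderOf y → t ∈ zpowers y)
include h1 ht

theorem reachable_of_isCycle_of_mem_zpowers (htT : t ∈ T) {u : T}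
    {w : ((powerGraph G).induce T).Walk u u} (hw : w.IsCycle) :
    ((powerGraph G).induce T).Reachable u ⟨t, htT⟩ := by
  obtain ⟨x, hux, hx⟩ := exists_reachable_two_lt_orderOf_of_isCycle h1 hw
  exact hux.trans (powerGraph_induce_reachable_of_mem_zpowers (Or.inr (ht _ hx)))

variable (ht2 : orderOf t = 2)
include ht2

theorem two_lt_orderOf_of_adj_of_not_mem (htT : t ∉ T) {c d : T}
    (hcd : ((powerGraph G).induce T).Adj c d) : 2 < orderOf (c : G) := by
  have ne_one (x : T) : (x : G) ≠ 1 := fun hx => h1 (hx ▸ x.2)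
  by_contra! hc
  have hc2 : orderOf (c : G) = 2 := le_antisymm hc (two_le_orderOf (ne_one c))
  have hcd' := mem_zpowers_of_powerGraph_adj_of_orderOf_eq_two hcd (ne_one d) hc2
  have hd := two_lt_orderOf_of_mem_zpowers hcd' hcd.1 (ne_one c)
  exact htT (subsingleton_orderOf_eq_two_mem_zpowers _ ⟨hcd', hc2⟩ ⟨ht _ hd, ht2⟩ ▸ c.2)

theorem IsPGroup.exists_reachable_four_lt_orderOf_of_isCycle (hG : IsPGroup 2 G) (htT : t ∉ T)
    {u : T} {w : ((powerGraph G).induce T).Walk u u} (hw : w.IsCycle) :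
    ∃ x : T, ((powerGraph G).induce T).Reachable u x ∧ 4 < orderOf (x : G) := by
  have hpu := w.adj_penultimate hw.not_nil
  have hus := w.adj_snd hw.not_nil
  have two_lt {c d : T} (hcd : ((powerGraph G).induce T).Adj c d) :=
    two_lt_orderOf_of_adj_of_not_mem h1 ht ht2 htT hcd
  rcases hG.four_lt_orderOf_of_powerGraph_adj hpu hus
      (fun h => hw.snd_ne_penultimate (Subtype.ext h).symm) (two_lt hpu) (two_lt hus)
      (two_lt hus.symm) with h | h | h
  · exact ⟨_, hpu.reachable.symm, h⟩
  · exact ⟨u, .refl u, h⟩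
  · exact ⟨_, hus.reachable, h⟩

end PowerGraph

theorem two_group_not_cyclically_separable_general
    (G : Type*) [Group G] [Finite G] (hG : IsPGroup 2 G)
    (h4 : ∀ M N : Subgroup G, IsMaximalCyclic M → IsMaximalCyclic N →
      4 < Nat.card M → 4 < Nat.card N → M = N)
    (h2 : ∀ M N : Subgroup G, IsMaximalCyclic M → IsMaximalCyclic N → M ≠ N →
      2 < Nat.card M → 2 < Nat.card N → M ⊓ N ≠ ⊥) :
    ¬ CyclicallySeparable (powerGraph G) := by
  rintro ⟨S, hdisc, u, v, huv, ⟨wu, hwu⟩, ⟨wv, hwv⟩⟩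
  have h1 : (1 : G) ∉ Sᶜ := fun h => hdisc (powerGraph_induce_connected_of_one_mem h)
  obtain ⟨x, -, hx⟩ := exists_reachable_two_lt_orderOf_of_isCycle h1 hwu
  obtain ⟨t, htx, ht2⟩ :=
    exists_mem_zpowers_orderOf_eq_of_dvd (hG.dvd_orderOf (fun h => h1 (h ▸ x.2)))
  have ht (y : G) (hy : 2 < orderOf y) : t ∈ zpowers y :=
    hG.mem_zpowers_of_orderOf_eq_two h2 ht2 htx hx hy
  by_cases htS : t ∈ Sᶜ
  · exact huv ((reachable_of_isCycle_of_mem_zpowers h1 ht htS hwu).trans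
      (reachable_of_isCycle_of_mem_zpowers h1 ht htS hwv).symm)
  · obtain ⟨y, huy, hy⟩ := hG.exists_reachable_four_lt_orderOf_of_isCycle h1 ht ht2 htS hwu
    obtain ⟨z, hvz, hz⟩ := hG.exists_reachable_four_lt_orderOf_of_isCycle h1 ht ht2 htS hwv
    exact huv (huy.trans ((powerGraph_induce_reachable_of_mem_zpowers
      (hG.mem_zpowers_or_mem_zpowers_of_four_lt h4 hy hz)).trans hvz.symm))

/-- A finite non-cyclic 2-group with at most one maximal cyclic subgroup of order
greater than 4, in which every pair of distinct maximal cyclic subgroups of order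
greater than 2 has nontrivial intersection, has a power graph that is not cyclically
separable. -/
theorem two_group_not_cyclically_separable
    (G : Type*) [Group G] [Finite G] (hG : IsPGroup 2 G) (hnc : ¬ IsCyclic G)
    (h4 : ∀ M N : Subgroup G, IsMaximalCyclic M → IsMaximalCyclic N →
      4 < Nat.card M → 4 < Nat.card N → M = N)
    (h2 : ∀ M N : Subgroup G, IsMaximalCyclic M → IsMaximalCyclic N → M ≠ N →
      2 < Nat.card M → 2 < Nat.card N → M ⊓ N ≠ ⊥) :
    ¬ CyclicallySeparable (powerGraph G) :=
  two_group_not_cyclically_separable_general G hG h4 h2
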